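/- Let V be a finite-dimensional real inner product space, I : V → V a linear projection with range U and kernel W, and Q : V → V the linear map with Qφ = −(orthogonal projection of φ onto W). Then for every φ ∈ U one has ⟪φ + Qφ, φ⟫ = ‖φ + Qφ‖², and this quantity is strictly positive whenever φ ≠ 0. In particular the Petrov–Galerkin bilinear form (φ, ψ) ↦ ⟪φ + Qφ, ψ⟫ is positive definite on U. -/

import Mathlib

/-!
`φ + Qφ = φ - P_W φ` is orthogonal to `P_W φ`, so `⟪φ + Qφ, φ⟫ = ‖φ + Qφ‖²`. This vanishes only
if `φ ∈ W`, and a nonzero `φ ∈ U` is not in `W` because the range and kernel of a projection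
are complementary.
-/

open scoped RealInnerProductSpace

namespace Submodule

variable {E : Type*} [NormedAddCommGroup E] [InnerProductSpace ℝ E]
  (K : Submodule ℝ E) [K.HasOrthogonalProjection]

theorem inner_sub_starProjection_self (v : E) :
    ⟪v - K.starProjection v, v⟫ = ‖v - K.starProjection v‖ ^ 2 := by
  have hsplit : ⟪v - K.starProjection v, v⟫ =
      ⟪v - K.starProjection v, v - K.starProjection v⟫ +
        ⟪v - K.starProjection v, K.starProjection v⟫ := by
    rw [← inner_add_right, sub_add_cancel]
  rw [hsplit, K.starProjection_inner_eq_zero v _ (K.starProjection_apply_mem v), add_zero,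
    real_inner_self_eq_norm_sq]

theorem inner_sub_starProjection_self_pos {v : E} (hv : v ∉ K) :
    0 < ⟪v - K.starProjection v, v⟫ := by
  have hne : v - K.starProjection v ≠ 0 :=
    sub_ne_zero.mpr fun h ↦ hv (starProjection_eq_self_iff.mp h.symm)
  rw [inner_sub_starProjection_self]
  exact pow_pos (norm_pos_iff.mpr hne) 2

end Submodule

theorem LinearMap.IsIdempotentElem.notMem_ker_of_mem_range {R M : Type*} [Ring R]
    [AddCommGroup M] [Module R M] {f : M →ₗ[R] M} (hf : IsIdempotentElem f) {x : M}
    (hx : x ∈ LinearMap.range f) (hx0 : x ≠ 0) : x ∉ LinearMap.ker f :=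
  fun hker ↦ hx0 (Submodule.disjoint_def.mp (isCompl hf).disjoint x hx hker)

/-- Coercivity of the ideal Petrov–Galerkin LOD bilinear form: if `I` is a linear
projection with range `U` and kernel `W`, and `Q φ = -(orthogonal projection of φ onto W)`,
then for `φ ∈ U` one has `⟪φ + Qφ, φ⟫ = ‖φ + Qφ‖²`, which is strictly positive for `φ ≠ 0`.
In particular the bilinear form `(φ, ψ) ↦ ⟪φ + Qφ, ψ⟫` is positive definite on `U`. -/
theorem lod_ideal_petrov_galerkin_coercive
    {V : Type*} [NormedAddCommGroup V] [InnerProductSpace ℝ V] [FiniteDimensional ℝ V]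
    (I : V →ₗ[ℝ] V) (hI : I ∘ₗ I = I)
    (Q : V →ₗ[ℝ] V)
    (hQ : ∀ φ : V, Q φ = -((LinearMap.ker I).orthogonalProjectionOnto φ : V)) :
    ∀ φ ∈ LinearMap.range I,
      ⟪φ + Q φ, φ⟫ = ‖φ + Q φ‖ ^ 2 ∧ (φ ≠ 0 → 0 < ⟪φ + Q φ, φ⟫) := by
  intro φ hφ
  have hQφ : φ + Q φ = φ - (LinearMap.ker I).starProjection φ := by
    rw [hQ φ, sub_eq_add_neg, Submodule.starProjection_apply]
  rw [hQφ]
  exact ⟨(LinearMap.ker I).inner_sub_starProjection_self φ, fun hφ0 ↦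
    (LinearMap.ker I).inner_sub_starProjection_self_pos
      (LinearMap.IsIdempotentElem.notMem_ker_of_mem_range hI hφ hφ0)⟩
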